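/- Let G be a finite simple unmixed chordal graph and let x be a simplicial vertex of G. Then for every neighbor y of x, the induced subgraph G \ {y} is unmixed. -/

import Mathlib

variable {V : Type*} [DecidableEq V]

/-- `S` is an independent set of the induced subgraph of `G` on the vertex set `A`. -/
def IsIndepIn (G : SimpleGraph V) (A S : Finset V) : Prop :=
  S ⊆ A ∧ ∀ u ∈ S, ∀ v ∈ S, ¬G.Adj u v

/-- `S` is a maximal independent set of the induced subgraph of `G` on the vertex set `A`. -/
def IsMaxIndepIn (G : SimpleGraph V) (A S : Finset V) : Prop :=
  IsIndepIn G A S ∧ ∀ T, IsIndepIn G A T → S ⊆ T → S = T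

/-- The induced subgraph of `G` on `A` is unmixed: all maximal independent sets
have the same cardinality. -/
def UnmixedOn (G : SimpleGraph V) (A : Finset V) : Prop :=
  ∀ S T, IsMaxIndepIn G A S → IsMaxIndepIn G A T → S.card = T.card

open scoped Classical in
/-- The vertex set `A \ N_G[x]`. -/
noncomputable def delClosedNbhd (G : SimpleGraph V) (A : Finset V) (x : V) : Finset V :=
  A.filter fun y => y ≠ x ∧ ¬G.Adj x y

/-- The induced subgraph of `G` on `A` is vertex decomposable. -/
inductive VertexDecomposableOn (G : SimpleGraph V) : Finset V → Prop
  | edgeless (A : Finset V) (h : ∀ u ∈ A, ∀ v ∈ A, ¬G.Adj u v) : VertexDecomposableOn G A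
  | shed (A : Finset V) (x : V) (hx : x ∈ A)
      (hlink : VertexDecomposableOn G (delClosedNbhd G A x))
      (hdel : VertexDecomposableOn G (A.erase x))
      (hexch : ∀ S, IsIndepIn G (delClosedNbhd G A x) S →
        ∃ y ∈ A, G.Adj x y ∧ IsIndepIn G (A.erase x) (insert y S)) :
      VertexDecomposableOn G A

/-- `x` is a shedding vertex of the induced subgraph of `G` on `A`. -/
def IsSheddingVertexOn (G : SimpleGraph V) (A : Finset V) (x : V) : Prop :=
  x ∈ A ∧
  VertexDecomposableOn G (delClosedNbhd G A x) ∧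
  VertexDecomposableOn G (A.erase x) ∧
  ∀ S, IsIndepIn G (delClosedNbhd G A x) S →
    ∃ y ∈ A, G.Adj x y ∧ IsIndepIn G (A.erase x) (insert y S)

/-- The independence complex of the induced subgraph of `G` on `A` is shellable:
there is an ordering `F 0, F 1, …` of its facets (the maximal independent sets) such
that for every `i`, every face of the subcomplex `(⋃ j < i, ⟨F j⟩) ∩ ⟨F i⟩` is contained
in a face of that subcomplex of cardinality `(F i).card - 1` (i.e. the subcomplex is
pure of dimension `dim (F i) - 1`). -/
def ShellableOn (G : SimpleGraph V) (A : Finset V) : Prop :=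
  ∃ (t : ℕ) (F : Fin t → Finset V),
    Function.Injective F ∧
    (∀ S, IsMaxIndepIn G A S ↔ ∃ i, F i = S) ∧
    ∀ i : Fin t, ∀ S : Finset V, S ⊆ F i → (∃ j, j < i ∧ S ⊆ F j) →
      ∃ S' : Finset V, S ⊆ S' ∧ S' ⊆ F i ∧ (∃ j, j < i ∧ S' ⊆ F j) ∧
        S'.card = (F i).card - 1

/-- A graph is chordal if every cycle of length at least four has a chord, i.e. an
edge of the graph joining two vertices of the cycle that is not an edge of the cycle. -/
def IsChordal (G : SimpleGraph V) : Prop :=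
  ∀ (x : V) (w : G.Walk x x), w.IsCycle → 4 ≤ w.length →
    ∃ u v, u ∈ w.support ∧ v ∈ w.support ∧ G.Adj u v ∧ s(u, v) ∉ w.edges

/-- The induced subgraph of `G` on `A` is a cycle graph on `m` vertices. -/
def IsCycleGraphOn (G : SimpleGraph V) (A : Finset V) (m : ℕ) : Prop :=
  (∀ u v, G.Adj u v → u ∈ A ∧ v ∈ A) ∧
  Nonempty (G.induce (A : Set V) ≃g SimpleGraph.cycleGraph m)

/-- The independence number of the induced subgraph of `G` on `A`. -/
noncomputable def indepNumOn (G : SimpleGraph V) (A : Finset V) : ℕ :=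
  sSup {k | ∃ S, IsIndepIn G A S ∧ S.card = k}


/-!
Deleting `y` keeps every maximal independent set maximal as long as it still contains a
neighbor of `y`. If `N[x] ⊆ N[y]` for a neighbor `x` of `y` (as when `x` is simplicial), a
maximal independent set of `G \ {y}` avoiding `N(y)` avoids `N[x]` as well and could be
enlarged by `x`. Hence the maximal independent sets of `G \ {y}` are maximal in `G`, and
unmixedness passes to `G \ {y}`.
-/

section

variable {G : SimpleGraph V} {A S : Finset V} {x y : V}

theorem IsIndepIn.insert (hS : IsIndepIn G A S) (hx : x ∈ A) (hxS : ∀ v ∈ S, ¬G.Adj x v) :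
    IsIndepIn G A (insert x S) := by
  refine ⟨Finset.insert_subset hx hS.1, ?_⟩
  intro u hu v hv
  rw [Finset.mem_insert] at hu hv
  rcases hu with rfl | hu <;> rcases hv with rfl | hv
  · exact G.loopless.irrefl _
  · exact hxS v hv
  · exact fun h => hxS u hu h.symm
  · exact hS.2 u hu v hv

theorem IsMaxIndepIn.of_erase_of_adj_mem {z : V} (hS : IsMaxIndepIn G (A.erase y) S)
    (hz : z ∈ S) (hyz : G.Adj y z) : IsMaxIndepIn G A S := by
  refine ⟨⟨hS.1.1.trans (Finset.erase_subset y A), hS.1.2⟩, fun T hT hST => ?_⟩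
  have hyT : y ∉ T := fun hyT => hT.2 y hyT z (hST hz) hyz
  exact hS.2 T ⟨fun t ht => Finset.mem_erase.mpr ⟨ne_of_mem_of_not_mem ht hyT, hT.1 ht⟩, hT.2⟩
    hST

theorem IsMaxIndepIn.exists_adj_mem_of_erase (hS : IsMaxIndepIn G (A.erase y) S) (hx : x ∈ A)
    (hxy : G.Adj x y) (hN : ∀ v, G.Adj x v → v ≠ y → G.Adj y v) : ∃ z ∈ S, G.Adj y z := by
  by_contra! hSy
  have hxS : ∀ v ∈ S, ¬G.Adj x v := fun v hv hxv =>
    hSy v hv (hN v hxv (ne_of_mem_of_not_mem (hS.1.1 hv) (Finset.notMem_erase y A)))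
  have hins := hS.1.insert (Finset.mem_erase.mpr ⟨hxy.ne, hx⟩) hxS
  have hxS' : x ∈ S := (hS.2 _ hins (Finset.subset_insert x S)) ▸ Finset.mem_insert_self x S
  exact hSy x hxS' hxy.symm

theorem UnmixedOn.erase_of_closedNbhd_subset (hun : UnmixedOn G A) (hx : x ∈ A)
    (hxy : G.Adj x y) (hN : ∀ v, G.Adj x v → v ≠ y → G.Adj y v) :
    UnmixedOn G (A.erase y) := by
  have hmax : ∀ S, IsMaxIndepIn G (A.erase y) S → IsMaxIndepIn G A S := fun S hS => by
    obtain ⟨z, hz, hyz⟩ := hS.exists_adj_mem_of_erase hx hxy hN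
    exact hS.of_erase_of_adj_mem hz hyz
  exact fun S T hS hT => hun S T (hmax S hS) (hmax T hT)

end

theorem stmt_12_general {V : Type*} [DecidableEq V] [Fintype V] (G : SimpleGraph V)
    (hun : UnmixedOn G Finset.univ) (x y : V)
    -- `x` is a simplicial vertex: its neighborhood is a clique
    (hsimp : ∀ u v, G.Adj x u → G.Adj x v → u ≠ v → G.Adj u v)
    -- `y` is a neighbor of `x`
    (hy : G.Adj x y) :
    UnmixedOn G (Finset.univ.erase y) :=
  hun.erase_of_closedNbhd_subset (Finset.mem_univ x) hy fun v hxv hvy =>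
    (hsimp v y hxv hy hvy).symm

/-- If `G` is a finite unmixed chordal graph and `x` is a simplicial vertex
of `G`, then `G \ {y}` is unmixed for every neighbor `y` of `x`. -/
theorem stmt_12 {V : Type*} [DecidableEq V] [Fintype V] (G : SimpleGraph V)
    (hun : UnmixedOn G Finset.univ) (hch : IsChordal G) (x y : V)
    -- `x` is a simplicial vertex: its neighborhood is a clique
    (hsimp : ∀ u v, G.Adj x u → G.Adj x v → u ≠ v → G.Adj u v)
    -- `y` is a neighbor of `x`
    (hy : G.Adj x y) :
    UnmixedOn G (Finset.univ.erase y) :=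
  stmt_12_general G hun x y hsimp hy
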